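/- Let k be an algebraically closed field, ℓ a non-trivial field extension of k, and V, W k-vector spaces. If there exist k-linear maps f, g : V → W such that for every pair of scalars λ, μ ∈ ℓ, not both zero, the ℓ-linear map Hom_k(λ,f) + Hom_k(μ,g) : Hom_k(ℓ,V) → Hom_k(ℓ,W) is an isomorphism, then V = 0 and W = 0. -/

import Mathlib

/-!
Specialising to `(λ, μ) = (1, 0)` and `(c, 1)` with `c ∈ k` shows that `f` and every `c • f + g`
are invertible, so `T = -f⁻¹ g` has empty spectrum. As `k` is algebraically closed, every nonzero
polynomial in `T` is then invertible, i.e. `V` is a divisible, hence injective, `k[X]`-module with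
`X` acting by `T`. Since `ℓ ≠ k`, it contains a transcendental `α`, so `k[X] ≅ k[α] ⊆ ℓ`, and
injectivity extends `1 ↦ v` to a `k`-linear `φ : ℓ → V` with `φ (α x) = T (φ x)`. This `φ` is
killed by `Hom_k(α, f) + Hom_k(1, g)`, so `φ = 0` and `v = φ 1 = 0`.
-/

open Function Polynomial

theorem Module.Baer.of_isPrincipalIdealRing {R Q : Type*} [CommRing R] [IsPrincipalIdealRing R]
    [AddCommGroup Q] [Module R Q] (hQ : ∀ r : R, r ≠ 0 → Surjective fun q : Q => r • q) :
    Module.Baer R Q := by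
  intro I g
  obtain ⟨p, rfl⟩ := (IsPrincipalIdealRing.principal I).principal
  have hp : p ∈ Ideal.span {p} := Ideal.mem_span_singleton_self p
  obtain ⟨q, hq⟩ : ∃ q : Q, p • q = g ⟨p, hp⟩ := by
    rcases eq_or_ne p 0 with rfl | hp0
    · exact ⟨0, by rw [smul_zero]; exact (map_zero g).symm⟩
    · exact hQ p hp0 _
  refine ⟨LinearMap.toSpanSingleton R Q q, fun x hx => ?_⟩
  obtain ⟨a, rfl⟩ := Ideal.mem_span_singleton'.mp hx
  rw [LinearMap.toSpanSingleton_apply, mul_smul, hq, ← map_smul]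
  rfl

theorem spectrum.isUnit_aeval_of_eq_empty {𝕜 A : Type*} [Field 𝕜] [IsAlgClosed 𝕜] [Ring A]
    [Algebra 𝕜 A] {a : A} (ha : spectrum 𝕜 a = ∅) {p : 𝕜[X]} (hp : p ≠ 0) :
    IsUnit (aeval a p) := by
  rcases le_or_gt p.degree 0 with hdeg | hdeg
  · rw [eq_C_of_degree_le_zero hdeg, aeval_C]
    refine (IsUnit.mk0 _ fun h0 => hp ?_).map (algebraMap 𝕜 A)
    rw [eq_C_of_degree_le_zero hdeg, h0, C_0]
  · rw [← spectrum.zero_notMem_iff 𝕜, map_polynomial_aeval_of_degree_pos a p hdeg, ha,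
      Set.image_empty]
    exact Set.notMem_empty 0

theorem spectrum_neg_symm_comp_eq_empty {k V W : Type*} [CommRing k] [AddCommGroup V]
    [Module k V] [AddCommGroup W] [Module k W] (e : V ≃ₗ[k] W) (g : V →ₗ[k] W)
    (h : ∀ c : k, Bijective (c • (e : V →ₗ[k] W) + g)) :
    spectrum k (-((e.symm : W →ₗ[k] V) ∘ₗ g)) = ∅ := by
  refine Set.eq_empty_of_forall_notMem fun c hc => spectrum.mem_iff.mp hc ?_
  have : ⇑(algebraMap k (Module.End k V) c - -((e.symm : W →ₗ[k] V) ∘ₗ g)) =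
      e.symm ∘ (c • (e : V →ₗ[k] W) + g) := by
    ext v; simp
  rw [Module.End.isUnit_iff, this]
  exact e.symm.bijective.comp (h c)

theorem IsAlgClosed.exists_transcendental {k ℓ : Type*} [Field k] [IsAlgClosed k] [Ring ℓ]
    [IsDomain ℓ] [Algebra k ℓ] (hℓ : ¬Surjective (algebraMap k ℓ)) :
    ∃ α : ℓ, Transcendental k α := by
  by_contra! H
  have : Algebra.IsAlgebraic k ℓ := ⟨fun x => by simpa [Transcendental] using H x⟩
  exact hℓ IsAlgClosed.algebraMap_bijective_of_isIntegral.2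

theorem Transcendental.exists_linearMap_intertwining {k ℓ V : Type*} [Field k] [Ring ℓ]
    [Algebra k ℓ] [AddCommGroup V] [Module k V] {α : ℓ} (hα : Transcendental k α)
    {T : Module.End k V}
    (hT : ∀ p : k[X], p ≠ 0 → IsUnit (Polynomial.aeval T p)) (v : V) :
    ∃ φ : ℓ →ₗ[k] V, φ 1 = v ∧ ∀ x, φ (α * x) = T (φ x) := by
  have hV : Module.Baer k[X] (Module.AEval' T) := Module.Baer.of_isPrincipalIdealRing
    fun p hp => ((Module.End.isUnit_iff _).mp (hT p hp)).surjective
  let i := LinearMap.toSpanSingleton k[X] (Module.AEval k ℓ α) (Module.AEval.of k ℓ α 1)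
  have hi : Injective i := by
    intro p q hpq
    simp only [i, LinearMap.toSpanSingleton_apply, ← Module.AEval.of_aeval_smul, smul_eq_mul,
      mul_one, (Module.AEval.of k ℓ α).injective.eq_iff] at hpq
    exact transcendental_iff_injective.mp hα hpq
  obtain ⟨ψ, hψ⟩ := hV.extension_property i hi
    (LinearMap.toSpanSingleton k[X] _ (Module.AEval'.of T v))
  refine ⟨(Module.AEval'.of T).symm.toLinearMap ∘ₗ ψ.restrictScalars k ∘ₗ
    (Module.AEval.of k ℓ α).toLinearMap, ?_, fun x => ?_⟩
  · simp only [LinearMap.coe_comp, LinearEquiv.coe_coe, comp_apply, LinearMap.coe_restrictScalars]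
    rw [LinearEquiv.symm_apply_eq]
    simpa [i] using LinearMap.congr_fun hψ 1
  · simp only [LinearMap.coe_comp, LinearEquiv.coe_coe, comp_apply, LinearMap.coe_restrictScalars]
    rw [← smul_eq_mul, ← Module.AEval.X_smul_of, map_smul, Module.AEval'.of_symm_X_smul]

theorem LinearMap.comp_mulLeft_algebraMap {k ℓ V : Type*} [CommSemiring k] [Semiring ℓ]
    [Algebra k ℓ] [AddCommMonoid V] [Module k V] (φ : ℓ →ₗ[k] V) (c : k) :
    φ ∘ₗ LinearMap.mulLeft k (algebraMap k ℓ c) = c • φ := by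
  ext x
  simp [← Algebra.smul_def]

theorem LinearMap.bijective_of_bijective_comp {K M V W : Type*} [Field K] [AddCommGroup M]
    [Module K M] [Nontrivial M] [AddCommGroup V] [Module K V] [AddCommGroup W] [Module K W]
    {p : V →ₗ[K] W} (hp : Bijective fun φ : M →ₗ[K] V => p ∘ₗ φ) : Bijective p := by
  obtain ⟨m, hm⟩ := exists_ne (0 : M)
  obtain ⟨σ, hσ⟩ := Module.Projective.exists_dual_eq_one K hm
  refine ⟨fun v₁ v₂ hv => ?_, fun w => ?_⟩
  · have : σ.smulRight v₁ = σ.smulRight v₂ := hp.injective (by ext; simp [hv])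
    simpa [hσ] using LinearMap.congr_fun this m
  · obtain ⟨φ, hφ⟩ := hp.surjective (σ.smulRight w)
    exact ⟨φ m, by simpa [hσ] using LinearMap.congr_fun hφ m⟩

theorem stmt0 {k ℓ V W : Type*} [Field k] [IsAlgClosed k] [Field ℓ] [Algebra k ℓ]
    (hℓ : ¬ Function.Surjective (algebraMap k ℓ))
    [AddCommGroup V] [Module k V] [AddCommGroup W] [Module k W]
    (f g : V →ₗ[k] W)
    (h : ∀ lam mu : ℓ, (lam ≠ 0 ∨ mu ≠ 0) →
      Function.Bijective (fun φ : ℓ →ₗ[k] V =>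
        (f.comp (φ.comp (LinearMap.mulLeft k lam))) +
        (g.comp (φ.comp (LinearMap.mulLeft k mu))))) :
    Subsingleton V ∧ Subsingleton W := by
  have hf : Bijective f := LinearMap.bijective_of_bijective_comp (M := ℓ) <| by
    simpa using h 1 0 (Or.inl one_ne_zero)
  have hfg (c : k) : Bijective (c • f + g) := LinearMap.bijective_of_bijective_comp (M := ℓ) <| by
    simpa [LinearMap.comp_mulLeft_algebraMap, LinearMap.add_comp, LinearMap.smul_comp,
      LinearMap.comp_smul] using h (algebraMap k ℓ c) 1 (Or.inr one_ne_zero)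
  let e := LinearEquiv.ofBijective f hf
  let T : Module.End k V := -((e.symm : W →ₗ[k] V) ∘ₗ g)
  have hT (p : k[X]) (hp : p ≠ 0) : IsUnit (aeval T p) :=
    spectrum.isUnit_aeval_of_eq_empty (spectrum_neg_symm_comp_eq_empty e g hfg) hp
  obtain ⟨α, hα⟩ := IsAlgClosed.exists_transcendental hℓ
  have hV : Subsingleton V := by
    refine subsingleton_of_forall_eq 0 fun v => ?_
    obtain ⟨φ, rfl, hφ⟩ := hα.exists_linearMap_intertwining hT v
    have : φ = 0 := (h α 1 (Or.inr one_ne_zero)).injective <| by ext x; simp [hφ, T, e]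
    simp [this]
  exact ⟨hV, hf.surjective.subsingleton⟩
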